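/- arXiv:2403.03151 — 2 statements merged into one kernel-verified Lean document; each statement's English description precedes it below -/
import Mathlib

section
/- Let $\sigma$ be a permutation of $\{1, \dots, n\}$ and let $h(\sigma)$ denote the height of the binary search tree obtained by inserting $\sigma(1), \dots, \sigma(n)$ in order. Then $h(\sigma) \le \mathrm{LIS}(\sigma) + \mathrm{LDS}(\sigma)$, where $\mathrm{LIS}(\sigma)$ and $\mathrm{LDS}(\sigma)$ denote the maximal lengths of increasing and decreasing subsequences of $\sigma$ respectively. -/
/-- Binary trees with real labels. -/
inductive BTree where
  | leaf : BTree
  | node : BTree → ℝ → BTree → BTree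

namespace BTree

/-- Insertion of a value into a binary search tree. -/
noncomputable def insert (x : ℝ) : BTree → BTree
  | leaf => node leaf x leaf
  | node l y r => if x < y then node (insert x l) y r else node l y (insert x r)

/-- Number of nodes. -/
def size : BTree → ℕ
  | leaf => 0
  | node l _ r => size l + 1 + size r

/-- Number of nodes on a longest root-to-leaf path. -/
def depth : BTree → ℕ
  | leaf => 0
  | node l _ r => 1 + max (depth l) (depth r)

/-- Height: maximal number of edges from the root to a leaf (`-1` for the empty tree). -/
def height (t : BTree) : ℤ := (depth t : ℤ) - 1

/-- The value `x` is a label of the tree. -/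
def Mem (x : ℝ) : BTree → Prop
  | leaf => False
  | node l y r => x = y ∨ Mem x l ∨ Mem x r

/-- The node labeled `a` is a (strict) ancestor of the node labeled `b`. -/
def IsAncestor (a b : ℝ) : BTree → Prop
  | leaf => False
  | node l y r => (a = y ∧ (Mem b l ∨ Mem b r)) ∨ IsAncestor a b l ∨ IsAncestor a b r

/-- A set of labels is a chain if any two of its nodes are comparable for the
ancestor relation. -/
def IsChain (t : BTree) (C : Set ℝ) : Prop :=
  ∀ a ∈ C, ∀ b ∈ C, a = b ∨ IsAncestor a b t ∨ IsAncestor b a t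

end BTree

/-- The binary search tree obtained by inserting the elements of a list in order. -/
noncomputable def bstOfList (l : List ℝ) : BTree := l.foldl (fun t x => t.insert x) .leaf

/-- The BST of a list of planar points, already sorted by increasing `x`-coordinate:
insert the `y`-coordinates in order. -/
noncomputable def bstOfSortedPts (l : List (ℝ × ℝ)) : BTree := bstOfList (l.map Prod.snd)

open scoped Classical in
/-- The BST of a finite set of planar points, given as a list: sort the points by
increasing `x`-coordinate and insert the `y`-coordinates in this order. -/
noncomputable def bstOfPts (l : List (ℝ × ℝ)) : BTree :=
  bstOfSortedPts (l.mergeSort (fun p q => decide (p.1 ≤ q.1)))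

open scoped Classical in
/-- Length of a longest increasing subsequence of `f`. -/
noncomputable def lisLen {n : ℕ} {β : Type*} [Preorder β] (f : Fin n → β) : ℕ :=
  Finset.univ.sup fun s : Finset (Fin n) => if StrictMonoOn f ↑s then s.card else 0

open scoped Classical in
/-- Length of a longest decreasing subsequence of `f`. -/
noncomputable def ldsLen {n : ℕ} {β : Type*} [Preorder β] (f : Fin n → β) : ℕ :=
  Finset.univ.sup fun s : Finset (Fin n) => if StrictAntiOn f ↑s then s.card else 0

/-
The root of the tree is the first inserted value `x`; its left subtree is the tree of
the later values below `x`, its right subtree that of the later values above `x`. By induction,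
a longest root-to-leaf path of a subtree is covered by an increasing and a decreasing
subsequence; prepending `x` to the decreasing one (left subtree) or to the increasing one
(right subtree) extends this to the whole tree.
-/

open scoped List

lemma foldl_insert_node (x : ℝ) (l : List ℝ) (L R : BTree) :
    l.foldl (fun (t : BTree) v => t.insert v) (.node L x R) =
      .node ((l.filter (· < x)).foldl (fun (t : BTree) v => t.insert v) L) x
        ((l.filter (¬ · < x)).foldl (fun (t : BTree) v => t.insert v) R) := by
  induction l generalizing L R with
  | nil => rfl
  | cons y l ih =>
    by_cases h : y < x
    · simp [BTree.insert, h, ih]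
    · simp [BTree.insert, h, not_lt.mp h, ih]

lemma bstOfList_cons (x : ℝ) (l : List ℝ) :
    bstOfList (x :: l) =
      .node (bstOfList (l.filter (· < x))) x (bstOfList (l.filter (¬ · < x))) :=
  foldl_insert_node x l .leaf .leaf

theorem exists_increasing_decreasing_sublists_depth_le : ∀ l : List ℝ, l.Nodup →
    ∃ s t : List ℝ, s <+ l ∧ s.Pairwise (· < ·) ∧ t <+ l ∧ t.Pairwise (· > ·) ∧
      (bstOfList l).depth ≤ s.length + t.length
  | [], _ => ⟨[], [], by simp [bstOfList, BTree.depth]⟩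
  | x :: l, hxl => by
    obtain ⟨hx, hl⟩ := List.nodup_cons.mp hxl
    have hlt : ∀ y ∈ l.filter (· < x), y < x := fun y hy => by
      simpa using (List.mem_filter.mp hy).2
    have hgt : ∀ y ∈ l.filter (¬ · < x), x < y := fun y hy => by
      obtain ⟨hyl, hy⟩ := List.mem_filter.mp hy
      exact lt_of_le_of_ne (by simpa using hy) (ne_of_mem_of_not_mem hyl hx).symm
    obtain ⟨s₁, t₁, hs₁, hs₁', ht₁, ht₁', hd₁⟩ :=
      exists_increasing_decreasing_sublists_depth_le _ (hl.filter (· < x))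
    obtain ⟨s₂, t₂, hs₂, hs₂', ht₂, ht₂', hd₂⟩ :=
      exists_increasing_decreasing_sublists_depth_le _ (hl.filter (¬ · < x))
    rw [bstOfList_cons, BTree.depth]
    rcases le_total (bstOfList (l.filter (¬ · < x))).depth
      (bstOfList (l.filter (· < x))).depth with h | h
    · refine ⟨s₁, x :: t₁, (hs₁.trans List.filter_sublist).cons x,
        hs₁', (ht₁.trans List.filter_sublist).cons_cons x,
        List.pairwise_cons.mpr ⟨fun y hy => hlt y (ht₁.subset hy), ht₁'⟩, ?_⟩
      simp only [List.length_cons]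
      omega
    · refine ⟨x :: s₂, t₂, (hs₂.trans List.filter_sublist).cons_cons x,
        List.pairwise_cons.mpr ⟨fun y hy => hgt y (hs₂.subset hy), hs₂'⟩,
        (ht₂.trans List.filter_sublist).cons x, ht₂', ?_⟩
      simp only [List.length_cons]
      omega
termination_by l => l.length
decreasing_by all_goals simpa using Nat.lt_succ_of_le (List.length_filter_le _ _)

section LongestSubsequences

variable {n : ℕ} {β : Type*}

open scoped Classical in
theorem card_le_lisLen [Preorder β] {f : Fin n → β} {s : Finset (Fin n)}
    (hs : StrictMonoOn f s) : s.card ≤ lisLen f := by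
  unfold lisLen
  exact (if_pos hs).symm.le.trans (Finset.le_sup (f := fun s : Finset (Fin n) =>
    if StrictMonoOn f ↑s then s.card else 0) (Finset.mem_univ s))

theorem length_le_lisLen [Preorder β] {f : Fin n → β} {s : List β}
    (hs : s <+ List.ofFn f) (hsorted : s.Pairwise (· < ·)) : s.length ≤ lisLen f := by
  obtain ⟨e, he⟩ := List.sublist_iff_exists_fin_orderEmbedding_get_eq.mp hs
  let g : Fin s.length ↪o Fin n := e.trans (Fin.castOrderIso (List.length_ofFn)).toOrderEmbedding
  have hfg : ∀ i, f (g i) = s.get i := fun i => ((he i).trans (List.get_ofFn ..)).symm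
  have hmono : StrictMonoOn f (Finset.univ.map g.toEmbedding : Finset (Fin n)) := by
    rw [Finset.coe_map, Finset.coe_univ, Set.image_univ]
    rintro _ ⟨i, rfl⟩ _ ⟨j, rfl⟩ hij
    simp only [RelEmbedding.coe_toEmbedding, hfg]
    exact List.pairwise_iff_get.mp hsorted i j (g.lt_iff_lt.mp hij)
  simpa using card_le_lisLen hmono

theorem ldsLen_eq_lisLen_toDual [Preorder β] (f : Fin n → β) :
    ldsLen f = lisLen (OrderDual.toDual ∘ f) :=
  rfl

theorem length_le_ldsLen [Preorder β] {f : Fin n → β} {s : List β}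
    (hs : s <+ List.ofFn f) (hsorted : s.Pairwise (· > ·)) : s.length ≤ ldsLen f := by
  rw [ldsLen_eq_lisLen_toDual]
  exact length_le_lisLen (β := βᵒᵈ) hs hsorted

theorem lisLen_comp_strictMono {γ : Type*} [LinearOrder β] [Preorder γ] {g : β → γ}
    (hg : StrictMono g) (f : Fin n → β) : lisLen (g ∘ f) = lisLen f := by
  have hiff (s : Set (Fin n)) : StrictMonoOn (g ∘ f) s ↔ StrictMonoOn f s := by
    simp only [StrictMonoOn, Function.comp, hg.lt_iff_lt]
  refine Finset.sup_congr rfl fun s _ => ?_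
  by_cases h : StrictMonoOn f s <;> simp [h, hiff]

theorem ldsLen_comp_strictMono {γ : Type*} [LinearOrder β] [Preorder γ] {g : β → γ}
    (hg : StrictMono g) (f : Fin n → β) : ldsLen (g ∘ f) = ldsLen f := by
  rw [ldsLen_eq_lisLen_toDual, ldsLen_eq_lisLen_toDual]
  exact lisLen_comp_strictMono hg.dual (OrderDual.toDual ∘ f)

end LongestSubsequences

/-- **The BST height is at most `LIS + LDS`.** For a permutation `σ` of `{1,…,n}`, the
height of the binary search tree obtained by inserting `σ 1, …, σ n` in order is at most
the sum of the lengths of a longest increasing and a longest decreasing subsequence. -/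
theorem stmt7 {n : ℕ} (σ : Equiv.Perm (Fin n)) :
    (bstOfList (List.ofFn (fun i => ((σ i : ℕ) : ℝ)))).height
      ≤ (lisLen (fun i => σ i) : ℤ) + (ldsLen (fun i => σ i) : ℤ) := by
  let g : Fin n → ℝ := fun k => ((k : ℕ) : ℝ)
  have hg : StrictMono g := Nat.strictMono_cast.comp Fin.val_strictMono
  change (bstOfList (List.ofFn (g ∘ σ))).height ≤ _
  obtain ⟨s, t, hs, hs', ht, ht', hdepth⟩ := exists_increasing_decreasing_sublists_depth_le _
    (List.nodup_ofFn.mpr (hg.injective.comp σ.injective))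
  have hlis : s.length ≤ lisLen (fun i => σ i) :=
    (length_le_lisLen hs hs').trans (lisLen_comp_strictMono hg (fun i => σ i)).le
  have hlds : t.length ≤ ldsLen (fun i => σ i) :=
    (length_le_ldsLen ht ht').trans (ldsLen_comp_strictMono hg (fun i => σ i)).le
  unfold BTree.height
  omega
end

section
/- Let $y_1, \dots, y_n$ be distinct real numbers, $\mathcal{T} = \mathrm{BST}(y_1,\dots,y_n)$, and let $u$ be a node of $\mathcal{T}$ with $\mathcal{T}(u) = y_k$. Then the number of descendants of $u$ in $\mathcal{T}$ (including $u$) equals $|\{y_k, y_{k+1}, \dots, y_n\} \cap (L(u), R(u))|$, where $L(u)$ is the label of the deepest ancestor of $u$ whose label is less than $\mathcal{T}(u)$ (or $-\infty$ if none exists) and $R(u)$ is the label of the deepest ancestor of $u$ whose label is greater than $\mathcal{T}(u)$ (or $+\infty$ if none exists). -/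
namespace BTree

def IsBST : BTree → Prop
  | leaf => True
  | node l y r => (∀ b, Mem b l → b < y) ∧ (∀ b, Mem b r → y < b) ∧ IsBST l ∧ IsBST r

def searchPath (x : ℝ) : BTree → Set ℝ
  | leaf => ∅
  | node l y r => Insert.insert y (if x < y then searchPath x l else searchPath x r)

theorem mem_insert {b x : ℝ} : ∀ {t : BTree}, Mem b (t.insert x) ↔ b = x ∨ Mem b t
  | leaf => by simp [BTree.insert, Mem]
  | node l y r => by
    by_cases h : x < y <;> simp only [BTree.insert, h, if_true, if_false, Mem, mem_insert] <;> tauto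

theorem IsAncestor.mem_ancestor {a b : ℝ} : ∀ {t : BTree}, IsAncestor a b t → Mem a t
  | leaf, h => h
  | node _ _ _, .inl ⟨h, _⟩ => .inl h
  | node _ _ _, .inr (.inl h) => .inr (.inl h.mem_ancestor)
  | node _ _ _, .inr (.inr h) => .inr (.inr h.mem_ancestor)

theorem IsAncestor.mem_descendant {a b : ℝ} : ∀ {t : BTree}, IsAncestor a b t → Mem b t
  | leaf, h => h
  | node _ _ _, .inl ⟨_, h⟩ => .inr h
  | node _ _ _, .inr (.inl h) => .inr (.inl h.mem_descendant)
  | node _ _ _, .inr (.inr h) => .inr (.inr h.mem_descendant)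

theorem mem_of_mem_searchPath {a x : ℝ} : ∀ {t : BTree}, a ∈ searchPath x t → Mem a t
  | leaf, h => h
  | node l y r, h => by
    rcases h with h | h
    · exact .inl h
    · split at h
      · exact .inr (.inl (mem_of_mem_searchPath h))
      · exact .inr (.inr (mem_of_mem_searchPath h))

theorem isAncestor_insert {a b x : ℝ} : ∀ {t : BTree},
    IsAncestor a b (t.insert x) ↔ IsAncestor a b t ∨ (b = x ∧ a ∈ searchPath x t)
  | leaf => by simp [BTree.insert, IsAncestor, Mem, searchPath]
  | node l y r => by
    by_cases h : x < y <;>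
      simp only [BTree.insert, h, if_true, if_false, IsAncestor, searchPath, mem_insert,
        isAncestor_insert, Set.mem_insert_iff] <;> tauto

theorem IsBST.insert {x : ℝ} : ∀ {t : BTree}, IsBST t → ¬ Mem x t → IsBST (t.insert x)
  | leaf, _, _ => by simp [BTree.insert, IsBST, Mem]
  | node l y r, ⟨hl, hr, bl, br⟩, hx => by
    simp only [Mem, not_or] at hx
    obtain ⟨hxy, hxl, hxr⟩ := hx
    by_cases h : x < y
    · simp only [BTree.insert, h, if_true, IsBST, mem_insert]
      exact ⟨fun b => by rintro (rfl | hb) <;> simp_all, hr, bl.insert hxl, br⟩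
    · simp only [BTree.insert, h, if_false, IsBST, mem_insert]
      have : y < x := lt_of_le_of_ne (not_lt.mp h) (Ne.symm hxy)
      exact ⟨hl, fun b => by rintro (rfl | hb) <;> simp_all, bl, br.insert hxr⟩

theorem IsBST.mem_searchPath_iff {x a : ℝ} : ∀ {t : BTree}, IsBST t → ¬ Mem x t → Mem a t →
    (a ∈ searchPath x t ↔ ∀ c, IsAncestor c a t → (c < a → c < x) ∧ (a < c → x < c))
  | leaf, _, _, ha => ha.elim
  | node l y r, ⟨hl, hr, bl, br⟩, hx, ha => by
    simp only [Mem, not_or] at hx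
    obtain ⟨hxy, hxl, hxr⟩ := hx
    rcases ha with rfl | ha | ha
    · have hal : ¬ Mem a l := fun h => (hl a h).false
      have har : ¬ Mem a r := fun h => (hr a h).false
      simp [searchPath, IsAncestor, hal, har, fun c => mt (@IsAncestor.mem_descendant c a l) hal,
        fun c => mt (@IsAncestor.mem_descendant c a r) har]
    · have hay := hl a ha
      have har : ¬ Mem a r := fun h => (hr a h).asymm hay
      have hanc : ∀ c, IsAncestor c a (node l y r) ↔ c = y ∨ IsAncestor c a l := fun c => by
        simp [IsAncestor, ha, har, mt (@IsAncestor.mem_descendant c a r) har]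
      have hnr : a ∉ searchPath x r := fun h => har (mem_of_mem_searchPath h)
      simp only [hanc, forall_eq_or_imp, ← bl.mem_searchPath_iff hxl ha, hay, not_lt_of_gt hay,
        true_imp_iff, false_imp_iff, true_and, searchPath, Set.mem_insert_iff, hay.ne, false_or]
      split_ifs with h <;> simp [h, hnr]
    · have hay := hr a ha
      have hal : ¬ Mem a l := fun h => (hl a h).asymm hay
      have hanc : ∀ c, IsAncestor c a (node l y r) ↔ c = y ∨ IsAncestor c a r := fun c => by
        simp [IsAncestor, ha, hal, mt (@IsAncestor.mem_descendant c a l) hal]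
      have hnl : a ∉ searchPath x l := fun h => hal (mem_of_mem_searchPath h)
      simp only [hanc, forall_eq_or_imp, ← br.mem_searchPath_iff hxr ha, hay, not_lt_of_gt hay,
        true_imp_iff, false_imp_iff, and_true, searchPath, Set.mem_insert_iff, hay.ne', false_or]
      split_ifs with h
      · simp [hnl, not_lt_of_gt h]
      · simp [lt_of_le_of_ne (not_lt.mp h) (Ne.symm hxy)]

end BTree

open BTree

theorem bstOfList_concat (l : List ℝ) (x : ℝ) : bstOfList (l ++ [x]) = (bstOfList l).insert x := by
  simp [bstOfList]

theorem mem_bstOfList {b : ℝ} (l : List ℝ) : Mem b (bstOfList l) ↔ b ∈ l := by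
  induction l using List.reverseRecOn with
  | nil => simp [bstOfList, Mem]
  | append_singleton l x ih => simp [bstOfList_concat, BTree.mem_insert, ih, or_comm]

theorem isBST_bstOfList {l : List ℝ} (hl : l.Nodup) : IsBST (bstOfList l) := by
  induction l using List.reverseRecOn with
  | nil => trivial
  | append_singleton l x ih =>
    rw [List.nodup_append] at hl
    rw [bstOfList_concat]
    exact (ih hl.1).insert fun hx => hl.2.2 x ((mem_bstOfList l).1 hx) x (by simp) rfl

theorem isAncestor_bstOfList_append {c x : ℝ} {l₁ l₂ : List ℝ} (h : (l₁ ++ l₂).Nodup)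
    (hx : x ∈ l₁) : IsAncestor c x (bstOfList (l₁ ++ l₂)) ↔ IsAncestor c x (bstOfList l₁) := by
  induction l₂ using List.reverseRecOn with
  | nil => simp
  | append_singleton l₂ z ih =>
    rw [← List.append_assoc] at h ⊢
    have hxz : x ≠ z := by
      rintro rfl
      exact List.disjoint_of_nodup_append h (List.mem_append_left _ hx) (List.mem_singleton_self x)
    rw [bstOfList_concat, isAncestor_insert, ih (List.nodup_append.1 h).1]
    simp [hxz]

theorem isAncestor_bstOfList_concat {a b : ℝ} {l : List ℝ} (hb : b ∉ l) :
    IsAncestor a b (bstOfList (l ++ [b])) ↔ a ∈ searchPath b (bstOfList l) := by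
  have hab : ¬ IsAncestor a b (bstOfList l) := fun h => hb ((mem_bstOfList l).1 h.mem_descendant)
  simp [bstOfList_concat, isAncestor_insert, hab]

theorem isAncestor_bstOfList_iff {x b : ℝ} {l₁ l₂ : List ℝ} (h : (l₁ ++ b :: l₂).Nodup) :
    IsAncestor x b (bstOfList (l₁ ++ b :: l₂)) ↔
      x ∈ l₁ ∧ ∀ c, IsAncestor c x (bstOfList (l₁ ++ b :: l₂)) →
        (c < x → c < b) ∧ (x < c → b < c) := by
  have hb : b ∉ l₁ := fun hb => (List.nodup_append.1 h).2.2 b hb b List.mem_cons_self rfl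
  have hdesc : IsAncestor x b (bstOfList (l₁ ++ b :: l₂)) ↔ x ∈ searchPath b (bstOfList l₁) := by
    have h' : (l₁ ++ [b] ++ l₂).Nodup := by simpa using h
    rw [show l₁ ++ b :: l₂ = l₁ ++ [b] ++ l₂ by simp, isAncestor_bstOfList_append h' (by simp),
      isAncestor_bstOfList_concat hb]
  rw [hdesc]
  by_cases hx : x ∈ l₁
  · simp only [hx, true_and, isAncestor_bstOfList_append h hx]
    exact (isBST_bstOfList (List.nodup_append.1 h).1).mem_searchPath_iff
      (fun hb' => hb ((mem_bstOfList l₁).1 hb')) ((mem_bstOfList l₁).2 hx)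
  · simp only [hx, false_and, iff_false]
    exact fun hx' => hx ((mem_bstOfList l₁).1 (mem_of_mem_searchPath hx'))

theorem EReal.sSup_image_coe_lt_coe_iff {A : Set ℝ} (hA : A.Finite) {b : ℝ} :
    sSup ((fun r : ℝ => (r : EReal)) '' A) < (b : EReal) ↔ ∀ a ∈ A, a < b := by
  rcases A.eq_empty_or_nonempty with rfl | hne
  · simp
  · simp [(hA.image _).csSup_lt_iff (hne.image _)]

theorem EReal.coe_lt_sInf_image_coe_iff {A : Set ℝ} (hA : A.Finite) {b : ℝ} :
    (b : EReal) < sInf ((fun r : ℝ => (r : EReal)) '' A) ↔ ∀ a ∈ A, b < a := by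
  rcases A.eq_empty_or_nonempty with rfl | hne
  · simp
  · simp [(hA.image _).lt_csInf_iff (hne.image _)]

theorem EReal.sSup_image_lt_coe_and_coe_lt_sInf_image_iff {P : ℝ → Prop} (hP : {r | P r}.Finite)
    (x b : ℝ) :
    (sSup ((fun r : ℝ => (r : EReal)) '' {r | P r ∧ r < x}) < (b : EReal) ∧
        (b : EReal) < sInf ((fun r : ℝ => (r : EReal)) '' {r | P r ∧ x < r}))
      ↔ ∀ c, P c → (c < x → c < b) ∧ (x < c → b < c) := by
  rw [EReal.sSup_image_coe_lt_coe_iff (hP.subset fun _ h => h.1),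
    EReal.coe_lt_sInf_image_coe_iff (hP.subset fun _ h => h.1)]
  simp only [Set.mem_ofPred_eq, and_imp, ← forall_and]

theorem List.ofFn_eq_take_append_cons_drop {α : Type*} {n : ℕ} (y : Fin n → α) (j : Fin n) :
    List.ofFn y = (List.ofFn y).take j ++ y j :: (List.ofFn y).drop (j + 1) := by
  have hj : (j : ℕ) < (List.ofFn y).length := by simp
  rw [← List.getElem_ofFn hj, List.getElem_cons_drop, List.take_append_drop]

theorem List.mem_take_ofFn_iff {α : Type*} {n : ℕ} {y : Fin n → α} (hy : Function.Injective y)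
    {k j : Fin n} : y k ∈ (List.ofFn y).take j ↔ k < j := by
  simp [List.mem_take_iff_getElem, hy.eq_iff, Fin.ext_iff]

theorem isAncestor_bstOfList_ofFn_iff {n : ℕ} {y : Fin n → ℝ} (hy : Function.Injective y)
    (k j : Fin n) :
    IsAncestor (y k) (y j) (bstOfList (List.ofFn y)) ↔
      k < j ∧ ∀ c, IsAncestor c (y k) (bstOfList (List.ofFn y)) →
        (c < y k → c < y j) ∧ (y k < c → y j < c) := by
  have h := List.nodup_ofFn.2 hy
  rw [List.ofFn_eq_take_append_cons_drop y j] at h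
  have hiff := isAncestor_bstOfList_iff (x := y k) h
  rwa [← List.ofFn_eq_take_append_cons_drop y j, List.mem_take_ofFn_iff hy] at hiff

/-- **Counting descendants in a binary search tree.** Let `y 0, …, y (n-1)` be distinct
reals, `T` their BST, and `u` the node labeled `y k`. The number of descendants of `u`
(including `u`) equals the number of indices `j ≥ k` with `y j ∈ (L(u), R(u))`, where
`L(u)` (resp. `R(u)`) is the largest ancestor label smaller than `y k` (resp. smallest
ancestor label larger than `y k`), `-∞` (resp. `+∞`) if there is none. -/
theorem stmt10 {n : ℕ} (y : Fin n → ℝ) (hy : Function.Injective y) (k : Fin n) :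
    {b : ℝ | b = y k ∨ BTree.IsAncestor (y k) b (bstOfList (List.ofFn y))}.ncard
      = {j : Fin n | k ≤ j ∧
          sSup ((fun r : ℝ => (r : EReal)) ''
              {r : ℝ | BTree.IsAncestor r (y k) (bstOfList (List.ofFn y)) ∧ r < y k})
            < ((y j : ℝ) : EReal) ∧
          ((y j : ℝ) : EReal)
            < sInf ((fun r : ℝ => (r : EReal)) ''
              {r : ℝ | BTree.IsAncestor r (y k) (bstOfList (List.ofFn y)) ∧ y k < r})}.ncard := by
  set T := bstOfList (List.ofFn y)
  have hfin : {c | IsAncestor c (y k) T}.Finite :=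
    (List.ofFn y).finite_toSet.subset fun c hc => (mem_bstOfList _).1 hc.mem_ancestor
  have hbetween (b : ℝ) := EReal.sSup_image_lt_coe_and_coe_lt_sInf_image_iff hfin (y k) b
  have hdesc := isAncestor_bstOfList_ofFn_iff hy k
  have hdescendants : {b | b = y k ∨ IsAncestor (y k) b T} =
      y '' {j | k ≤ j ∧ ∀ c, IsAncestor c (y k) T → (c < y k → c < y j) ∧ (y k < c → y j < c)} := by
    ext b
    constructor
    · rintro (rfl | hb)
      · exact ⟨k, ⟨le_rfl, fun c _ => ⟨id, id⟩⟩, rfl⟩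
      · obtain ⟨j, rfl⟩ := List.mem_ofFn.1 ((mem_bstOfList _).1 hb.mem_descendant)
        obtain ⟨hkj, hc⟩ := (hdesc j).1 hb
        exact ⟨j, ⟨hkj.le, hc⟩, rfl⟩
    · rintro ⟨j, ⟨hkj, hc⟩, rfl⟩
      rcases hkj.eq_or_lt with rfl | hkj
      · exact .inl rfl
      · exact .inr ((hdesc j).2 ⟨hkj, hc⟩)
  simp only [hbetween, hdescendants, Set.ncard_image_of_injective _ hy]
end
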